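/- arXiv:1309.3717 — 2 statements merged into one kernel-verified Lean document; each statement's English description precedes it below -/
import Mathlib

section
/- Let N be a squarefree positive integer and, for each prime p dividing N, let δ_p ∈ {1, p^{k-1}} where k ≥ 4 is even. If l is a prime not dividing N such that for every prime p | N with δ_p = 1 we have p^k ≡ 1 (mod l), and there exists at least one prime p₀ | N with δ_{p₀} = 1, then for every divisor v of N, the product ∏_{p | N} (1 - δ_p (gcd(p,v)/p)^k), viewed as a rational number, has numerator divisible by l. -/
/-!
Every prime `p ∣ N` is an `l`-adic unit and every `δ p` is an integer, so each factor of the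
product has `l`-adic norm at most `1`. At `p₀` the factor is `0` if `p₀ ∣ v` and
`(p₀ ^ k - 1) / p₀ ^ k` otherwise, which has norm `< 1` because `p₀ ^ k ≡ 1 [MOD l]`. Hence the
product has `l`-adic norm `< 1`, which says exactly that `l` divides its numerator.
-/

namespace padicNorm

variable {l : ℕ} [Fact l.Prime]

theorem lt_one_iff_dvd_num (q : ℚ) : padicNorm l q < 1 ↔ (l : ℤ) ∣ q.num := by
  rw [← Rat.num_div_den q, padicNorm.div, Rat.num_div_den]
  have hden0 : 0 < padicNorm l q.den :=
    (padicNorm.nonneg _).lt_of_ne' (padicNorm.nonzero (by exact_mod_cast q.den_nz))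
  constructor
  · intro h
    by_contra hl
    rw [(int_eq_one_iff q.num).mpr hl, div_lt_one hden0] at h
    exact h.not_ge (of_nat _)
  · intro hl
    have hden : ¬ l ∣ q.den := fun hden =>
      (Nat.Prime.one_lt Fact.out).ne' <|
        Nat.eq_one_of_dvd_coprimes q.reduced (Int.natCast_dvd.mp hl) hden
    rw [(nat_eq_one_iff _).mpr hden, div_one]
    exact (int_lt_one_iff _).mpr hl

theorem prod {ι : Type*} (s : Finset ι) (f : ι → ℚ) :
    padicNorm l (∏ i ∈ s, f i) = ∏ i ∈ s, padicNorm l (f i) :=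
  map_prod (IsAbsoluteValue.abvHom' (padicNorm l)) f s

theorem prod_lt_one {ι : Type*} {s : Finset ι} {f : ι → ℚ} {i₀ : ι}
    (hle : ∀ i ∈ s, padicNorm l (f i) ≤ 1) (hi₀ : i₀ ∈ s) (hlt : padicNorm l (f i₀) < 1) :
    padicNorm l (∏ i ∈ s, f i) < 1 := by
  classical
  rw [padicNorm.prod, ← Finset.mul_prod_erase s _ hi₀]
  calc padicNorm l (f i₀) * ∏ i ∈ s.erase i₀, padicNorm l (f i)
      ≤ padicNorm l (f i₀) * 1 := by
        gcongr
        · exact padicNorm.nonneg _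
        · exact Finset.prod_le_one (fun i _ => padicNorm.nonneg _)
            (fun i hi => hle i (Finset.mem_of_mem_erase hi))
    _ < 1 := by rwa [mul_one]

theorem natCast_prime_eq_one {p : ℕ} (hp : p.Prime) (hpl : p ≠ l) : padicNorm l p = 1 :=
  (nat_eq_one_iff p).mpr fun h => hpl ((Nat.prime_dvd_prime_iff_eq Fact.out hp).mp h).symm

end padicNorm

section

variable {l : ℕ} [Fact l.Prime]

theorem padicNorm_one_sub_mul_div_pow_le_one {p g : ℕ} {δ : ℚ} (k : ℕ)
    (hp : padicNorm l p = 1) (hδ : padicNorm l δ ≤ 1) :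
    padicNorm l (1 - δ * ((g : ℚ) / p) ^ k) ≤ 1 := by
  refine padicNorm.sub.trans (max_le padicNorm.one.le ?_)
  rw [padicNorm.mul, IsAbsoluteValue.abv_pow (padicNorm l), padicNorm.div, hp, div_one]
  exact mul_le_one₀ hδ (pow_nonneg (padicNorm.nonneg _) _)
    (pow_le_one₀ (padicNorm.nonneg _) (padicNorm.of_nat g))

theorem padicNorm_one_sub_div_pow_lt_one {p : ℕ} (hp : p.Prime) (hpl : p ≠ l) (k v : ℕ)
    (hpk : (p : ZMod l) ^ k = 1) :
    padicNorm l (1 - ((Nat.gcd p v : ℚ) / p) ^ k) < 1 := by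
  have hp0 : (p : ℚ) ≠ 0 := by exact_mod_cast hp.ne_zero
  rcases Nat.coprime_or_dvd_of_prime hp v with hcop | hdvd
  · have hfrac :
        1 - ((Nat.gcd p v : ℚ) / p) ^ k = ((p ^ k - 1 : ℤ) : ℚ) / (p : ℚ) ^ k := by
      rw [Nat.Coprime.gcd_eq_one hcop, Nat.cast_one, div_pow, one_pow]
      push_cast
      field_simp
    rw [hfrac, padicNorm.div, IsAbsoluteValue.abv_pow (padicNorm l),
      padicNorm.natCast_prime_eq_one hp hpl, one_pow, div_one, padicNorm.int_lt_one_iff,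
      ← ZMod.intCast_eq_intCast_iff_dvd_sub]
    push_cast
    exact hpk.symm
  · rw [Nat.gcd_eq_left hdvd, div_self hp0, one_pow, sub_self, padicNorm.zero]
    exact zero_lt_one

end

theorem constant_terms_vanish_general (N k l : ℕ)
    (hl : l.Prime) (hlN : ¬ l ∣ N)
    (δ : ℕ → ℚ) (hδ : ∀ p ∈ N.primeFactors, δ p = 1 ∨ δ p = (p : ℚ) ^ (k - 1))
    (hcong : ∀ p ∈ N.primeFactors, δ p = 1 → (p : ZMod l) ^ k = 1)
    (hex : ∃ p₀ ∈ N.primeFactors, δ p₀ = 1)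
    (v : ℕ) :
    (l : ℤ) ∣ (∏ p ∈ N.primeFactors,
      (1 - δ p * ((Nat.gcd p v : ℚ) / (p : ℚ)) ^ k)).num := by
  have : Fact l.Prime := ⟨hl⟩
  have hpl : ∀ p ∈ N.primeFactors, p ≠ l := fun p hp hpl =>
    hlN (hpl ▸ Nat.dvd_of_mem_primeFactors hp)
  obtain ⟨p₀, hp₀, hδp₀⟩ := hex
  rw [← padicNorm.lt_one_iff_dvd_num]
  refine padicNorm.prod_lt_one (fun p hp => ?_) hp₀ ?_
  · refine padicNorm_one_sub_mul_div_pow_le_one k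
      (padicNorm.natCast_prime_eq_one (Nat.prime_of_mem_primeFactors hp) (hpl p hp)) ?_
    rcases hδ p hp with h | h
    · rw [h]
      exact padicNorm.one.le
    · rw [h]
      exact_mod_cast padicNorm.of_nat (p ^ (k - 1))
  · rw [hδp₀, one_mul]
    exact padicNorm_one_sub_div_pow_lt_one (Nat.prime_of_mem_primeFactors hp₀) (hpl p₀ hp₀) k v
      (hcong p₀ hp₀ hδp₀)

theorem constant_terms_vanish (N k l : ℕ) (hN : 0 < N) (hNsf : Squarefree N)
    (hk : 4 ≤ k) (hke : Even k) (hl : l.Prime) (hlN : ¬ l ∣ N)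
    (δ : ℕ → ℚ) (hδ : ∀ p ∈ N.primeFactors, δ p = 1 ∨ δ p = (p : ℚ) ^ (k - 1))
    (hcong : ∀ p ∈ N.primeFactors, δ p = 1 → (p : ZMod l) ^ k = 1)
    (hex : ∃ p₀ ∈ N.primeFactors, δ p₀ = 1)
    (v : ℕ) (hv : v ∣ N) :
    (l : ℤ) ∣ (∏ p ∈ N.primeFactors,
      (1 - δ p * ((Nat.gcd p v : ℚ) / (p : ℚ)) ^ k)).num :=
  constant_terms_vanish_general N k l hl hlN δ hδ hcong hex v
end

section
/- Let M, v be positive integers with u an integer coprime to v·M'/r where r = gcd(v,M). Let c, d be integers with c·M·u + d·v = 0 and u ≠ 0. Write M' = M/r and v' = v/r. If N | c, d ≡ j (mod N) with gcd(j,N) = 1, then N | v' and M'·u | d. Conversely, if N | v' and M'·u | d, then c := -d·v/(M·u) is an integer with c·M·u + d·v = 0 and N | c. -/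
/-!
Dividing `c * M * u + d * v = 0` by `r = gcd v M` gives `c * M' * u = -d * v'` with `v'` coprime
to `M'` (by construction) and to `u` (as `u * δ - v * β = 1`). If `N ∣ c`, then `N ∣ d * v'`, and
`d ≡ j` is a unit mod `N`, so `N ∣ v'`; and `M' * u ∣ d * v'` with `M' * u` coprime to `v'`, so
`M' * u ∣ d`. Conversely, if `d = M' * u * k`, then `c = -k * v'` is a solution, divisible by `N`.
-/

theorem IsCoprime.of_dvd_sub {R : Type*} [CommRing R] {j d N : R} (hj : IsCoprime j N)
    (hd : N ∣ d - j) : IsCoprime d N := by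
  obtain ⟨k, hk⟩ := hd
  rw [show d = j + N * k by linear_combination hk]
  exact hj.add_mul_left_left k

theorem exists_dvd_mul_mul_add_mul_eq_zero_iff {R : Type*} [CommRing R] {N M u v d : R}
    (hvM : IsCoprime v M) (huv : IsCoprime u v) (hdN : IsCoprime d N) :
    (∃ c : R, N ∣ c ∧ c * M * u + d * v = 0) ↔ N ∣ v ∧ M * u ∣ d := by
  constructor
  · rintro ⟨c, hNc, hc⟩
    have hcd : d * v = -c * (M * u) := by linear_combination hc
    refine ⟨hdN.symm.dvd_of_dvd_mul_left ?_, (hvM.symm.mul_left huv).dvd_of_dvd_mul_right ?_⟩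
    · exact hcd ▸ hNc.neg_right.mul_right (M * u)
    · exact hcd ▸ dvd_mul_left (M * u) (-c)
  · rintro ⟨hNv, k, rfl⟩
    exact ⟨-(k * v), (hNv.mul_left k).neg_right, by ring⟩

theorem Int.mul_mul_add_mul_eq_zero_iff_ediv {r M v : ℤ} (hr : r ≠ 0) (hrM : r ∣ M)
    (hrv : r ∣ v) (c u d : ℤ) :
    c * M * u + d * v = 0 ↔ c * (M / r) * u + d * (v / r) = 0 := by
  obtain ⟨M', rfl⟩ := hrM
  obtain ⟨v', rfl⟩ := hrv
  rw [Int.mul_ediv_cancel_left _ hr, Int.mul_ediv_cancel_left _ hr,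
    show c * (r * M') * u + d * (r * v') = r * (c * M' * u + d * v') by ring,
    mul_eq_zero, or_iff_right hr]

theorem Int.isCoprime_ediv_gcd_ediv_gcd {v M : ℤ} (hM : M ≠ 0) :
    IsCoprime (v / (Int.gcd v M : ℤ)) (M / (Int.gcd v M : ℤ)) := by
  rw [Int.coe_gcd]
  exact isCoprime_div_gcd_div_gcd hM

theorem divisibility_equivalence_general (M N u v β δ j d : ℤ)
    (hM : 1 ≤ M) (hdet : u * δ - v * β = 1)
    (hj : IsCoprime j N) (hd : N ∣ d - j) :
    (∃ c : ℤ, N ∣ c ∧ c * M * u + d * v = 0) ↔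
      (N ∣ v / (Int.gcd v M : ℤ) ∧ (M / (Int.gcd v M : ℤ)) * u ∣ d) := by
  have hM0 : M ≠ 0 := by omega
  have hr : (Int.gcd v M : ℤ) ≠ 0 := Int.natCast_ne_zero.mpr (Int.gcd_ne_zero_right hM0)
  have huv : IsCoprime u v := ⟨δ, -β, by linear_combination hdet⟩
  have huv' : IsCoprime u (v / (Int.gcd v M : ℤ)) :=
    huv.of_isCoprime_of_dvd_right (Int.ediv_dvd_of_dvd (Int.gcd_dvd_left v M))
  simp only [Int.mul_mul_add_mul_eq_zero_iff_ediv hr (Int.gcd_dvd_right v M)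
    (Int.gcd_dvd_left v M)]
  exact exists_dvd_mul_mul_add_mul_eq_zero_iff (Int.isCoprime_ediv_gcd_ediv_gcd hM0) huv'
    (hj.of_dvd_sub hd)

theorem divisibility_equivalence (M N u v β δ j d : ℤ)
    (hM : 1 ≤ M) (hN : 1 ≤ N) (hdet : u * δ - v * β = 1) (hu : u ≠ 0)
    (hNM : IsCoprime N M) (hj : IsCoprime j N) (hd : N ∣ d - j) :
    (∃ c : ℤ, N ∣ c ∧ c * M * u + d * v = 0) ↔
      (N ∣ v / (Int.gcd v M : ℤ) ∧ (M / (Int.gcd v M : ℤ)) * u ∣ d) :=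
  divisibility_equivalence_general M N u v β δ j d hM hdet hj hd
end
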